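/- Let M ∈ ℝ^{m×n} have unit-norm columns and satisfy the RIP of order 2k with constant δ ≤ 0.445 (δ > 0). Let x ∈ ℝⁿ have support L with |L| = k and let y = Mx. Let T ⊆ {1,…,n} be any set of indices with |T| = k and T ≠ L. Then there exist indices i ∈ L∖T and j ∈ T∖L such that ⟨R_T m_(i), y⟩² / ‖R_T m_(i)‖² ≥ ⟨R_{T∖j} m_(j), y⟩² / ‖R_{T∖j} m_(j)‖²; that is, the decrease in squared residual obtained by adding the correct atom m_(i) to T is at least the increase in squared residual caused by removing the wrong atom m_(j) from T. -/

import Mathlib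

open Matrix

noncomputable section

/-- `M` satisfies the RIP of order `s` with constant `δ` if
`(1−δ)‖v‖² ≤ ‖Mv‖² ≤ (1+δ)‖v‖²` for every `v` with at most `s` nonzero entries. -/
def RIP {m n : ℕ} (M : Matrix (Fin m) (Fin n) ℝ) (s : ℕ) (δ : ℝ) : Prop :=
  ∀ v : Fin n → ℝ, (∃ S : Finset (Fin n), S.card ≤ s ∧ ∀ i ∉ S, v i = 0) →
    (1 - δ) * (v ⬝ᵥ v) ≤ (M *ᵥ v) ⬝ᵥ (M *ᵥ v) ∧
      (M *ᵥ v) ⬝ᵥ (M *ᵥ v) ≤ (1 + δ) * (v ⬝ᵥ v)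

/-- `M_T`: the submatrix of `M` of the columns indexed by `T`. -/
def colsOf {m n : ℕ} (M : Matrix (Fin m) (Fin n) ℝ) (T : Finset (Fin n)) :
    Matrix (Fin m) {i // i ∈ T} ℝ :=
  M.submatrix id fun j => (j : Fin n)

/-- `P_T = M_T (M_TᵀM_T)⁻¹ M_Tᵀ`. -/
def projT {m n : ℕ} (M : Matrix (Fin m) (Fin n) ℝ) (T : Finset (Fin n)) :
    Matrix (Fin m) (Fin m) ℝ :=
  colsOf M T * ((colsOf M T)ᵀ * colsOf M T)⁻¹ * (colsOf M T)ᵀ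

/-- `R_T = I − P_T`. -/
def residT {m n : ℕ} (M : Matrix (Fin m) (Fin n) ℝ) (T : Finset (Fin n)) :
    Matrix (Fin m) (Fin m) ℝ :=
  1 - projT M T

/-!
Let `ẑ` be the least-squares coefficients of `y` on the columns in `T`, extended by zero, and
`w = x - ẑ`. Then `r = R_T y = M w`, `w` is supported on `L ∪ T`, and `r ⟂ m_(l)` for `l ∈ T`.
Expanding `‖r‖² = ⟨r, M w⟩` over `L ∖ T`, Cauchy–Schwarz together with the RIP bound
`‖r‖² ≥ (1 - δ)‖w‖² ≥ ‖w‖² / 2` gives `∑_{T ∖ L} ẑ_j² ≤ ∑_{L ∖ T} ⟨m_(i), r⟩²`. As `L ∖ T` and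
`T ∖ L` have the same size, some `i`, `j` satisfy `ẑ_j² ≤ ⟨m_(i), r⟩²`. Finally the gain from adding
`m_(i)` is `⟨m_(i), r⟩² / ‖R_T m_(i)‖² ≥ ⟨m_(i), r⟩²`, while the loss from removing `m_(j)` is exactly
`ẑ_j² ‖R_{T∖j} m_(j)‖² ≤ ẑ_j²`.
-/

open Finset

section ExtendByZero

variable {ι R : Type*} [DecidableEq ι] [NonUnitalNonAssocSemiring R] {S : Finset ι}

def extendByZero (S : Finset ι) (v : S → R) : ι → R :=
  fun i => if h : i ∈ S then v ⟨i, h⟩ else 0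

@[simp]
lemma extendByZero_coe (v : S → R) (j : S) : extendByZero S v j = v j :=
  dif_pos j.2

lemma extendByZero_of_notMem (v : S → R) {i : ι} (hi : i ∉ S) : extendByZero S v i = 0 :=
  dif_neg hi

variable [Fintype ι]

lemma sum_mul_extendByZero (g : ι → R) (v : S → R) :
    ∑ i, g i * extendByZero S v i = ∑ j : S, g j * v j := by
  rw [← sum_subset (subset_univ S) fun i _ hi => by rw [extendByZero_of_notMem v hi, mul_zero],
    ← sum_coe_sort]
  simp only [extendByZero_coe]

lemma dotProduct_extendByZero_self (v : S → R) :
    extendByZero S v ⬝ᵥ extendByZero S v = v ⬝ᵥ v := by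
  simp only [dotProduct, sum_mul_extendByZero, extendByZero_coe]

end ExtendByZero

lemma Finset.exists_le_of_sum_le_sum_of_card_eq {ι κ M : Type*} [AddCommMonoid M]
    [LinearOrder M] [IsOrderedCancelAddMonoid M] {s : Finset ι} {t : Finset κ}
    (hs : s.Nonempty) (hcard : t.card = s.card) {f : ι → M} {g : κ → M}
    (h : ∑ j ∈ t, g j ≤ ∑ i ∈ s, f i) :
    ∃ i ∈ s, ∃ j ∈ t, g j ≤ f i := by
  by_contra! hlt
  obtain ⟨j₀, hj₀, hmin⟩ := t.exists_min_image g (card_pos.mp (hcard ▸ hs.card_pos))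
  have : ∑ i ∈ s, f i < ∑ j ∈ t, g j := calc
    ∑ i ∈ s, f i < ∑ _i ∈ s, g j₀ := sum_lt_sum_of_nonempty hs fun i hi => hlt i hi j₀ hj₀
    _ = ∑ _j ∈ t, g j₀ := by simp only [sum_const, hcard]
    _ ≤ ∑ j ∈ t, g j := sum_le_sum hmin
  exact this.not_ge h

lemma mul_sq_div_self {G₀ : Type*} [CommGroupWithZero G₀] (a d : G₀) :
    (a * d) ^ 2 / d = a ^ 2 * d := by
  rw [mul_pow, sq d, mul_div_assoc, mul_self_div_self]

lemma dotProduct_self_nonneg {ι : Type*} [Fintype ι] (v : ι → ℝ) : 0 ≤ v ⬝ᵥ v :=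
  sum_nonneg fun i _ => mul_self_nonneg (v i)

variable {m n : ℕ} {M : Matrix (Fin m) (Fin n) ℝ}

lemma mulVec_extendByZero (M : Matrix (Fin m) (Fin n) ℝ) (S : Finset (Fin n)) (v : S → ℝ) :
    M *ᵥ extendByZero S v = colsOf M S *ᵥ v :=
  funext fun r => sum_mul_extendByZero (M r) v

lemma dotProduct_mulVec_eq_sum (M : Matrix (Fin m) (Fin n) ℝ) (u : Fin m → ℝ) (v : Fin n → ℝ) :
    u ⬝ᵥ (M *ᵥ v) = ∑ l, v l * ((fun r => M r l) ⬝ᵥ u) := by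
  rw [dotProduct_mulVec, ← mulVec_transpose, dotProduct_comm]
  rfl

lemma dotProduct_mulVec_eq_zero {T : Finset (Fin n)} {u : Fin m → ℝ} {v : Fin n → ℝ}
    (hv : ∀ l ∉ T, v l = 0) (hu : ∀ l ∈ T, (fun r => M r l) ⬝ᵥ u = 0) :
    u ⬝ᵥ (M *ᵥ v) = 0 := by
  rw [dotProduct_mulVec_eq_sum]
  refine sum_eq_zero fun l _ => ?_
  by_cases hl : l ∈ T
  · rw [hu l hl, mul_zero]
  · rw [hv l hl, zero_mul]

theorem RIP.posDef_gram {s : ℕ} {δ : ℝ} (h : RIP M s δ) (hδ : δ < 1) {S : Finset (Fin n)}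
    (hS : S.card ≤ s) : ((colsOf M S)ᵀ * colsOf M S).PosDef := by
  rw [← conjTranspose_eq_transpose_of_trivial]
  refine .conjTranspose_mul_self _ fun v w hvw => ?_
  have hker : colsOf M S *ᵥ (v - w) = 0 := by rw [mulVec_sub, hvw, sub_self]
  have hrip := (h (extendByZero S (v - w)) ⟨S, hS, fun i hi => extendByZero_of_notMem _ hi⟩).1
  rw [mulVec_extendByZero, hker, dotProduct_extendByZero_self, zero_dotProduct] at hrip
  have hnorm : (v - w) ⬝ᵥ (v - w) = 0 :=
    le_antisymm (nonpos_of_mul_nonpos_right hrip (by linarith)) (dotProduct_self_nonneg _)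
  exact sub_eq_zero.mp (dotProduct_self_eq_zero.mp hnorm)

theorem RIP.isUnit_det_gram {s : ℕ} {δ : ℝ} (h : RIP M s δ) (hδ : δ < 1) {S : Finset (Fin n)}
    (hS : S.card ≤ s) : IsUnit ((colsOf M S)ᵀ * colsOf M S).det :=
  (h.posDef_gram hδ hS).det_pos.ne'.isUnit

section Residual

variable (M) (S : Finset (Fin n))

def leastSquaresCoeff (u : Fin m → ℝ) : Fin n → ℝ :=
  extendByZero S (((colsOf M S)ᵀ * colsOf M S)⁻¹ *ᵥ ((colsOf M S)ᵀ *ᵥ u))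

lemma leastSquaresCoeff_of_notMem (u : Fin m → ℝ) {l : Fin n} (hl : l ∉ S) :
    leastSquaresCoeff M S u l = 0 :=
  extendByZero_of_notMem _ hl

lemma residT_mulVec (u : Fin m → ℝ) : residT M S *ᵥ u = u - M *ᵥ leastSquaresCoeff M S u := by
  rw [leastSquaresCoeff, mulVec_extendByZero, residT, projT, sub_mulVec, one_mulVec,
    mulVec_mulVec, mulVec_mulVec]

lemma residT_transpose : (residT M S)ᵀ = residT M S := by
  rw [residT, projT, transpose_sub, transpose_one, transpose_mul, transpose_mul,
    transpose_transpose, transpose_nonsing_inv, transpose_mul, transpose_transpose,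
    Matrix.mul_assoc]

lemma residT_mulVec_dotProduct (u w : Fin m → ℝ) :
    (residT M S *ᵥ u) ⬝ᵥ w = u ⬝ᵥ (residT M S *ᵥ w) := by
  rw [dotProduct_mulVec, ← mulVec_transpose, residT_transpose, dotProduct_comm]

variable {M S} (hG : IsUnit ((colsOf M S)ᵀ * colsOf M S).det)
include hG

lemma residT_mul_colsOf : residT M S * colsOf M S = 0 := by
  rw [residT, projT, Matrix.sub_mul, Matrix.one_mul, Matrix.mul_assoc, Matrix.mul_assoc,
    nonsing_inv_mul _ hG, Matrix.mul_one, sub_self]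

lemma residT_mul_self : residT M S * residT M S = residT M S := by
  change residT M S * (1 - projT M S) = _
  rw [Matrix.mul_sub, Matrix.mul_one, projT, ← Matrix.mul_assoc, ← Matrix.mul_assoc,
    residT_mul_colsOf hG, Matrix.zero_mul, Matrix.zero_mul, sub_zero]

lemma residT_mulVec_col {l : Fin n} (hl : l ∈ S) : residT M S *ᵥ (fun r => M r l) = 0 := by
  have hcol : (fun r => M r l) = colsOf M S *ᵥ Pi.single ⟨l, hl⟩ 1 := by
    funext r
    simp [colsOf, mulVec_single]
  rw [hcol, mulVec_mulVec, residT_mul_colsOf hG, zero_mulVec]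

lemma col_dotProduct_residT_mulVec {l : Fin n} (hl : l ∈ S) (u : Fin m → ℝ) :
    (fun r => M r l) ⬝ᵥ (residT M S *ᵥ u) = 0 := by
  rw [← residT_mulVec_dotProduct, residT_mulVec_col hG hl, zero_dotProduct]

lemma residT_mulVec_dotProduct_self (u : Fin m → ℝ) :
    (residT M S *ᵥ u) ⬝ᵥ (residT M S *ᵥ u) = u ⬝ᵥ (residT M S *ᵥ u) := by
  rw [residT_mulVec_dotProduct, mulVec_mulVec, residT_mul_self hG]

lemma residT_mulVec_dotProduct_self_le (u : Fin m → ℝ) :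
    (residT M S *ᵥ u) ⬝ᵥ (residT M S *ᵥ u) ≤ u ⬝ᵥ u := by
  have hpyth := dotProduct_self_nonneg (u - residT M S *ᵥ u)
  have hself := residT_mulVec_dotProduct_self hG u
  rw [sub_dotProduct, dotProduct_sub, dotProduct_sub,
    dotProduct_comm (residT M S *ᵥ u) u] at hpyth
  linarith

lemma sq_col_dotProduct_residT_div_le {i : Fin n}
    (hpos : 0 < (residT M S *ᵥ fun r => M r i) ⬝ᵥ (residT M S *ᵥ fun r => M r i))
    (y : Fin m → ℝ) :
    ((fun r => M r i) ⬝ᵥ (residT M S *ᵥ y)) ^ 2 / ((fun r => M r i) ⬝ᵥ (fun r => M r i)) ≤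
      ((residT M S *ᵥ fun r => M r i) ⬝ᵥ y) ^ 2 /
        ((residT M S *ᵥ fun r => M r i) ⬝ᵥ (residT M S *ᵥ fun r => M r i)) := by
  rw [residT_mulVec_dotProduct]
  exact div_le_div_of_nonneg_left (sq_nonneg _) hpos (residT_mulVec_dotProduct_self_le hG _)

end Residual

lemma residT_erase_col_dotProduct {T : Finset (Fin n)} {j : Fin n} (hj : j ∈ T)
    (hG : IsUnit ((colsOf M (T.erase j))ᵀ * colsOf M (T.erase j)).det) {r : Fin m → ℝ}
    {z : Fin n → ℝ} (hr : ∀ l ∈ T, (fun ρ => M ρ l) ⬝ᵥ r = 0) (hz : ∀ l ∉ T, z l = 0) :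
    (residT M (T.erase j) *ᵥ fun ρ => M ρ j) ⬝ᵥ (r + M *ᵥ z) =
      z j * ((residT M (T.erase j) *ᵥ fun ρ => M ρ j) ⬝ᵥ
        (residT M (T.erase j) *ᵥ fun ρ => M ρ j)) := by
  have hres_r : (residT M (T.erase j) *ᵥ fun ρ => M ρ j) ⬝ᵥ r = 0 := by
    rw [residT_mulVec, sub_dotProduct, hr j hj, dotProduct_comm, zero_sub, neg_eq_zero]
    exact dotProduct_mulVec_eq_zero
      (fun l hl => leastSquaresCoeff_of_notMem _ _ _ fun h => hl (mem_of_mem_erase h)) hr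
  have hres_z : (residT M (T.erase j) *ᵥ fun ρ => M ρ j) ⬝ᵥ (M *ᵥ z) =
      z j * ((residT M (T.erase j) *ᵥ fun ρ => M ρ j) ⬝ᵥ
        (residT M (T.erase j) *ᵥ fun ρ => M ρ j)) := by
    rw [dotProduct_mulVec_eq_sum, sum_eq_single j, residT_mulVec_dotProduct_self hG]
    · intro l _ hlj
      by_cases hl : l ∈ T
      · rw [col_dotProduct_residT_mulVec hG (mem_erase.mpr ⟨hlj, hl⟩), mul_zero]
      · rw [hz l hl, zero_mul]
    · exact fun h => absurd (mem_univ j) h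
  rw [dotProduct_add, hres_r, hres_z, zero_add]

lemma sq_residT_erase_col_dotProduct_div_le {T : Finset (Fin n)} {j : Fin n} (hj : j ∈ T)
    (hG : IsUnit ((colsOf M (T.erase j))ᵀ * colsOf M (T.erase j)).det) {r : Fin m → ℝ}
    {z : Fin n → ℝ} (hr : ∀ l ∈ T, (fun ρ => M ρ l) ⬝ᵥ r = 0) (hz : ∀ l ∉ T, z l = 0) :
    ((residT M (T.erase j) *ᵥ fun ρ => M ρ j) ⬝ᵥ (r + M *ᵥ z)) ^ 2 /
        ((residT M (T.erase j) *ᵥ fun ρ => M ρ j) ⬝ᵥ (residT M (T.erase j) *ᵥ fun ρ => M ρ j)) ≤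
      z j ^ 2 * ((fun ρ => M ρ j) ⬝ᵥ (fun ρ => M ρ j)) := by
  rw [residT_erase_col_dotProduct hj hG hr hz, mul_sq_div_self]
  exact mul_le_mul_of_nonneg_left (residT_mulVec_dotProduct_self_le hG _) (sq_nonneg _)

section RIP

variable {s : ℕ} {δ : ℝ}

theorem RIP.one_sub_le_residT_col (h : RIP M s δ) (hδ : δ ≤ 1) {S : Finset (Fin n)}
    (hS : S.card + 1 ≤ s) {i : Fin n} (hi : i ∉ S) :
    1 - δ ≤ (residT M S *ᵥ fun r => M r i) ⬝ᵥ (residT M S *ᵥ fun r => M r i) := by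
  set u : Fin n → ℝ := Pi.single i 1 - leastSquaresCoeff M S fun r => M r i
  have hMu : M *ᵥ u = residT M S *ᵥ fun r => M r i := by
    rw [residT_mulVec, mulVec_sub, mulVec_single_one]
    rfl
  have hsupp : ∀ l ∉ insert i S, u l = 0 := by
    intro l hl
    rw [mem_insert, not_or] at hl
    simp [u, Pi.single_eq_of_ne hl.1, leastSquaresCoeff_of_notMem _ _ _ hl.2]
  have hui : u i = 1 := by simp [u, leastSquaresCoeff_of_notMem _ _ _ hi]
  have hu : 1 ≤ u ⬝ᵥ u := calc
    1 = u i * u i := by rw [hui, mul_one]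
    _ ≤ u ⬝ᵥ u :=
      single_le_sum (f := fun l => u l * u l) (fun l _ => mul_self_nonneg _) (mem_univ i)
  have hrip := (h u ⟨insert i S, (card_insert_le i S).trans hS, hsupp⟩).1
  rw [hMu] at hrip
  nlinarith

theorem RIP.sum_sq_sdiff_le_sum_sq_col_dotProduct (h : RIP M s δ) (hδ : δ ≤ 1 / 2)
    {L T : Finset (Fin n)} (hLT : (L ∪ T).card ≤ s) {w : Fin n → ℝ}
    (hw : ∀ l ∉ L ∪ T, w l = 0) (horth : ∀ l ∈ T, (fun r => M r l) ⬝ᵥ (M *ᵥ w) = 0) :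
    ∑ j ∈ T \ L, w j ^ 2 ≤ ∑ i ∈ L \ T, ((fun r => M r i) ⬝ᵥ (M *ᵥ w)) ^ 2 := by
  set r := M *ᵥ w with hr
  set a := ∑ i ∈ L \ T, w i ^ 2
  set c := ∑ j ∈ T \ L, w j ^ 2
  set b := ∑ i ∈ L \ T, ((fun ρ => M ρ i) ⬝ᵥ r) ^ 2
  have hρ : r ⬝ᵥ r = ∑ i ∈ L \ T, w i * ((fun ρ => M ρ i) ⬝ᵥ r) := by
    conv_lhs => rw [hr, dotProduct_mulVec_eq_sum]
    refine (sum_subset (subset_univ _) fun l _ hl => ?_).symm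
    by_cases hlT : l ∈ T
    · rw [horth l hlT, mul_zero]
    · rw [hw l (by simp_all), zero_mul]
  have hsplit : a + c ≤ w ⬝ᵥ w := by
    rw [← sum_union disjoint_sdiff_sdiff]
    simp only [dotProduct, ← sq]
    exact sum_le_sum_of_subset_of_nonneg (subset_univ _) fun l _ _ => sq_nonneg (w l)
  have ha : 0 ≤ a := sum_nonneg fun i _ => sq_nonneg (w i)
  have hc : 0 ≤ c := sum_nonneg fun i _ => sq_nonneg (w i)
  have hrip := (h w ⟨L ∪ T, hLT, hw⟩).1
  have hρ_lb : (a + c) / 2 ≤ r ⬝ᵥ r := by nlinarith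
  have hcs : (r ⬝ᵥ r) ^ 2 ≤ a * b := hρ ▸ sum_mul_sq_le_sq_mul_sq _ _ _
  -- AM-GM: `a c ≤ ((a + c) / 2) ^ 2 ≤ ‖r‖⁴ ≤ a b`
  have hac : a * c ≤ a * b := by nlinarith [sq_nonneg (a - c)]
  rcases ha.eq_or_lt with ha0 | ha_pos
  · nlinarith [sum_nonneg fun i (_ : i ∈ L \ T) => sq_nonneg ((fun ρ => M ρ i) ⬝ᵥ r)]
  · exact le_of_mul_le_mul_left hac ha_pos

end RIP

theorem stmt8_general {m n k : ℕ} (M : Matrix (Fin m) (Fin n) ℝ) (δ : ℝ)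
    (hδ1 : δ ≤ 0.445)
    (hunit : ∀ j : Fin n, (fun r => M r j) ⬝ᵥ (fun r => M r j) = 1)
    (hRIP : RIP M (2 * k) δ)
    (x : Fin n → ℝ) (L : Finset (Fin n)) (hsupp : ∀ i, x i ≠ 0 ↔ i ∈ L)
    (hL : L.card = k) (y : Fin m → ℝ) (hy : y = M *ᵥ x)
    (T : Finset (Fin n)) (hT : T.card = k) (hTL : T ≠ L) :
    ∃ i ∈ L \ T, ∃ j ∈ T \ L,
      ((residT M T *ᵥ fun r => M r i) ⬝ᵥ y) ^ 2 /
          ((residT M T *ᵥ fun r => M r i) ⬝ᵥ (residT M T *ᵥ fun r => M r i)) ≥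
        ((residT M (T.erase j) *ᵥ fun r => M r j) ⬝ᵥ y) ^ 2 /
          ((residT M (T.erase j) *ᵥ fun r => M r j) ⬝ᵥ
            (residT M (T.erase j) *ᵥ fun r => M r j)) := by
  have hδ : δ ≤ 1 / 2 := by norm_num at hδ1 ⊢; linarith
  have hLT : (L \ T).Nonempty :=
    sdiff_nonempty.mpr fun h => hTL (eq_of_subset_of_card_le h (by omega)).symm
  have hk : 1 ≤ k := hL ▸ card_pos.mpr (hLT.mono sdiff_subset)
  have hG : ∀ S ⊆ T, IsUnit ((colsOf M S)ᵀ * colsOf M S).det := fun S hS =>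
    hRIP.isUnit_det_gram (by linarith) ((card_le_card hS).trans (by omega))
  set z := leastSquaresCoeff M T y
  have hz : ∀ l ∉ T, z l = 0 := fun l => leastSquaresCoeff_of_notMem M T y
  have hx : ∀ l ∉ L, x l = 0 := fun l hl => not_not.mp (mt (hsupp l).mp hl)
  have hr : residT M T *ᵥ y = M *ᵥ (x - z) := by rw [residT_mulVec, mulVec_sub, ← hy]
  have horth : ∀ l ∈ T, (fun r => M r l) ⬝ᵥ (M *ᵥ (x - z)) = 0 := fun l hl =>
    hr ▸ col_dotProduct_residT_mulVec (hG T subset_rfl) hl y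
  have hw : ∀ l ∉ L ∪ T, (x - z) l = 0 := fun l hl => by
    rw [mem_union, not_or] at hl
    rw [Pi.sub_apply, hx l hl.1, hz l hl.2, sub_zero]
  obtain ⟨i, hi, j, hj, hij⟩ := exists_le_of_sum_le_sum_of_card_eq hLT
    (card_sdiff_comm (hT.trans hL.symm)) (hRIP.sum_sq_sdiff_le_sum_sq_col_dotProduct hδ
      ((card_union_le L T).trans (by omega)) hw horth)
  refine ⟨i, hi, j, hj, ?_⟩
  have hgain := sq_col_dotProduct_residT_div_le (hG T subset_rfl)
    ((by linarith : (0 : ℝ) < 1 - δ).trans_le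
      (hRIP.one_sub_le_residT_col (by linarith) (by omega) (mem_sdiff.mp hi).2)) y
  have hloss := sq_residT_erase_col_dotProduct_div_le (mem_sdiff.mp hj).1
    (hG _ (erase_subset j T)) horth hz
  rw [hunit, div_one, hr] at hgain
  rw [hunit, mul_one, ← mulVec_add, sub_add_cancel, ← hy] at hloss
  calc _ ≤ z j ^ 2 := hloss
    _ = (x - z) j ^ 2 := by rw [Pi.sub_apply, hx j (mem_sdiff.mp hj).2, zero_sub, neg_sq]
    _ ≤ _ := hij
    _ ≤ _ := hgain

theorem stmt8 {m n k : ℕ} (M : Matrix (Fin m) (Fin n) ℝ) (δ : ℝ)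
    (hδ0 : 0 < δ) (hδ1 : δ ≤ 0.445)
    (hunit : ∀ j : Fin n, (fun r => M r j) ⬝ᵥ (fun r => M r j) = 1)
    (hRIP : RIP M (2 * k) δ)
    (x : Fin n → ℝ) (L : Finset (Fin n)) (hsupp : ∀ i, x i ≠ 0 ↔ i ∈ L)
    (hL : L.card = k) (y : Fin m → ℝ) (hy : y = M *ᵥ x)
    (T : Finset (Fin n)) (hT : T.card = k) (hTL : T ≠ L) :
    ∃ i ∈ L \ T, ∃ j ∈ T \ L,
      ((residT M T *ᵥ fun r => M r i) ⬝ᵥ y) ^ 2 /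
          ((residT M T *ᵥ fun r => M r i) ⬝ᵥ (residT M T *ᵥ fun r => M r i)) ≥
        ((residT M (T.erase j) *ᵥ fun r => M r j) ⬝ᵥ y) ^ 2 /
          ((residT M (T.erase j) *ᵥ fun r => M r j) ⬝ᵥ
            (residT M (T.erase j) *ᵥ fun r => M r j)) :=
  stmt8_general M δ hδ1 hunit hRIP x L hsupp hL y hy T hT hTL

end
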